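/- Let i ≥ 1 and j ≥ 0 be integers and θ > 1 a real number, and suppose there exist constants C > 0 and A > 0 such that |Σ_{n ≤ t} τ(n)^i − C·t·(log t)^{2^i − 1}| ≤ A·t·(log t)^{2^i − 2} for all real t ≥ 3. Then there exists a constant B > 0, depending only on i, j, θ, C and A, such that for all real x ≥ 3 the (convergent) series satisfies Σ_{n > x} τ(n)^i (log n)^j n^{−θ} ≤ B·(log x)^{2^i + j − 1}·x^{1−θ}. -/

import Mathlib

/-!
Split the tail `n > x` into the dyadic blocks `(m 2^k, m 2^(k+1)]` with `m = ⌊x⌋`. On the `k`-th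
block the weight `(log n)^j n^(-θ)` is at most `(log (m 2^(k+1)))^j (m 2^k)^(-θ)`, and the upper
bound `Σ_{n ≤ t} τ(n)^i ≤ (C + A) t (log t)^(2^i - 1)` bounds the block by a constant times
`m^(1-θ) (log m)^(2^i - 1 + j) (k + 2)^(2^i - 1 + j) 2^((1-θ) k)`. Since `θ > 1` the factors
depending on `k` form a convergent series.
-/

open Finset Real

lemma one_le_log_of_three_le {t : ℝ} (ht : 3 ≤ t) : 1 ≤ log t := by
  rw [le_log_iff_exp_le (by linarith)]
  linarith [exp_one_lt_d9]

lemma le_add_mul_of_abs_sub_le {s C A t L : ℝ} {d e : ℕ} (hA : 0 ≤ A) (ht : 0 ≤ t) (hL : 1 ≤ L)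
    (hde : d ≤ e) (h : |s - C * t * L ^ e| ≤ A * t * L ^ d) : s ≤ (C + A) * t * L ^ e := by
  have hpow : A * t * L ^ d ≤ A * t * L ^ e := by gcongr
  linarith [(abs_le.mp h).2]

lemma summable_add_two_pow_mul_geometric {r : ℝ} (hr₀ : r ≠ 0) (hr : ‖r‖ < 1) (M : ℕ) :
    Summable fun k : ℕ => ((k : ℝ) + 2) ^ M * r ^ k := by
  have hshift : Summable fun k : ℕ => ((k + 2 : ℕ) : ℝ) ^ M * r ^ (k + 2) :=
    (summable_nat_add_iff (f := fun n : ℕ => (n : ℝ) ^ M * r ^ n) 2).mpr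
      (summable_pow_mul_geometric_of_norm_lt_one M hr)
  have hscaled : Summable fun k : ℕ => r ^ 2 * (((k : ℝ) + 2) ^ M * r ^ k) :=
    hshift.congr fun k => by push_cast; ring
  exact (summable_mul_left_iff (pow_ne_zero 2 hr₀)).mp hscaled

lemma log_mul_two_pow_le {m : ℝ} (hm : 2 ≤ m) (k : ℕ) :
    log (m * 2 ^ (k + 1)) ≤ (k + 2) * log m := by
  have hlog2 : log 2 ≤ log m := log_le_log (by norm_num) hm
  rw [log_mul (by linarith) (by positivity), log_pow]
  push_cast
  nlinarith

lemma summable_and_tsum_le_of_dyadic_blocks {g b : ℕ → ℝ} (hg : ∀ n, 0 ≤ g n) (hb : Summable b)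
    {m : ℕ} (hm : 0 < m) (hblock : ∀ k, ∑ p ∈ Ioc (m * 2 ^ k) (m * 2 ^ (k + 1)), g p ≤ b k) :
    Summable (fun n => if m < n then g n else 0) ∧
      ∑' n, (if m < n then g n else 0) ≤ ∑' k, b k := by
  have hb₀ : ∀ k, 0 ≤ b k := fun k => (sum_nonneg fun p _ => hg p).trans (hblock k)
  have hdyadic : ∀ K, ∑ p ∈ Ioc m (m * 2 ^ K), g p ≤ ∑ k ∈ range K, b k := by
    intro K
    induction K with
    | zero => simp
    | succ K ih =>
      rw [← sum_Ioc_consecutive g (Nat.le_mul_of_pos_right m (Nat.two_pow_pos K))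
        (Nat.mul_le_mul_left m (Nat.pow_le_pow_right two_pos K.le_succ)), sum_range_succ]
      exact add_le_add ih (hblock K)
  have hpartial : ∀ n, ∑ p ∈ range n, (if m < p then g p else 0) ≤ ∑' k, b k := by
    intro n
    have hsub : {p ∈ range n | m < p} ⊆ Ioc m (m * 2 ^ n) := by
      intro p hp
      simp only [mem_filter, mem_range] at hp
      have : n < 2 ^ n := Nat.lt_two_pow_self
      exact mem_Ioc.mpr ⟨hp.2, by nlinarith⟩
    calc ∑ p ∈ range n, (if m < p then g p else 0)
        = ∑ p ∈ range n with m < p, g p := (sum_filter _ _).symm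
      _ ≤ ∑ p ∈ Ioc m (m * 2 ^ n), g p := sum_le_sum_of_subset_of_nonneg hsub fun p _ _ => hg p
      _ ≤ ∑ k ∈ range n, b k := hdyadic n
      _ ≤ ∑' k, b k := hb.sum_le_tsum _ fun k _ => hb₀ k
  have hsum := summable_of_sum_range_le (fun n => by split_ifs <;> simp [hg]) hpartial
  exact ⟨hsum, hsum.tsum_le_of_sum_range_le hpartial⟩

section TailBound

variable {a : ℕ → ℝ} {c θ : ℝ} {e : ℕ}

lemma sum_Ioc_two_mul_le (ha : ∀ n, 0 ≤ a n) (hθ : 0 ≤ θ) (j : ℕ) {N : ℕ} (hN : 0 < N)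
    (hS : ∑ n ∈ Icc 1 (2 * N), a n ≤ c * (2 * N : ℕ) * log (2 * N : ℕ) ^ e) :
    ∑ p ∈ Ioc N (2 * N), a p * log p ^ j * (p : ℝ) ^ (-θ)
      ≤ 2 * c * (N : ℝ) ^ (1 - θ) * log (2 * N) ^ (e + j) := by
  have hN₀ : (0 : ℝ) < N := by exact_mod_cast hN
  set L := log (2 * (N : ℝ))
  have hL₀ : 0 ≤ L := log_nonneg (by linarith [(Nat.one_le_cast (α := ℝ)).mpr hN])
  have hweight : ∀ p ∈ Ioc N (2 * N), log p ^ j * (p : ℝ) ^ (-θ) ≤ L ^ j * (N : ℝ) ^ (-θ) := by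
    intro p hp
    obtain ⟨hNp, hp2N⟩ := mem_Ioc.mp hp
    have hNp' : (N : ℝ) ≤ p := by exact_mod_cast hNp.le
    have hp2N' : (p : ℝ) ≤ 2 * N := by exact_mod_cast hp2N
    have hp₀ : (0 : ℝ) < p := hN₀.trans_le hNp'
    exact mul_le_mul
      (pow_le_pow_left₀ (log_natCast_nonneg p) (log_le_log hp₀ hp2N') j)
      (rpow_le_rpow_of_nonpos hN₀ hNp' (by linarith)) (by positivity) (by positivity)
  have hIoc : ∑ p ∈ Ioc N (2 * N), a p ≤ ∑ p ∈ Icc 1 (2 * N), a p :=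
    sum_le_sum_of_subset_of_nonneg (fun p hp => by simp only [mem_Ioc, mem_Icc] at hp ⊢; omega)
      fun p _ _ => ha p
  push_cast at hS
  calc ∑ p ∈ Ioc N (2 * N), a p * log p ^ j * (p : ℝ) ^ (-θ)
      ≤ ∑ p ∈ Ioc N (2 * N), a p * (L ^ j * (N : ℝ) ^ (-θ)) :=
        sum_le_sum fun p hp => by
          rw [mul_assoc]
          exact mul_le_mul_of_nonneg_left (hweight p hp) (ha p)
    _ = (∑ p ∈ Ioc N (2 * N), a p) * (L ^ j * (N : ℝ) ^ (-θ)) := (sum_mul _ _ _).symm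
    _ ≤ (c * (2 * N) * L ^ e) * (L ^ j * (N : ℝ) ^ (-θ)) := by
        gcongr
        exact hIoc.trans hS
    _ = 2 * c * (N : ℝ) ^ (1 - θ) * L ^ (e + j) := by
        rw [sub_eq_add_neg, rpow_add hN₀, rpow_one, pow_add]
        ring

lemma sum_Ioc_mul_two_pow_le (ha : ∀ n, 0 ≤ a n) (hc : 0 ≤ c) (hθ : 0 ≤ θ) (j : ℕ)
    (hS : ∀ m : ℕ, 3 ≤ m → ∑ n ∈ Icc 1 m, a n ≤ c * m * log m ^ e) {m : ℕ} (hm : 3 ≤ m) (k : ℕ) :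
    ∑ p ∈ Ioc (m * 2 ^ k) (m * 2 ^ (k + 1)), a p * log p ^ j * (p : ℝ) ^ (-θ)
      ≤ 2 * c * (m : ℝ) ^ (1 - θ) * log m ^ (e + j)
          * (((k : ℝ) + 2) ^ (e + j) * ((2 : ℝ) ^ (1 - θ)) ^ k) := by
  have hm' : (3 : ℝ) ≤ m := by exact_mod_cast hm
  have hN : 3 ≤ m * 2 ^ k := hm.trans (Nat.le_mul_of_pos_right m (Nat.two_pow_pos k))
  have hblock := sum_Ioc_two_mul_le ha hθ j (N := m * 2 ^ k) (by omega) (hS _ (by omega))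
  rw [show 2 * (m * 2 ^ k) = m * 2 ^ (k + 1) by ring] at hblock
  have hrpow : ((m * 2 ^ k : ℕ) : ℝ) ^ (1 - θ) = (m : ℝ) ^ (1 - θ) * ((2 : ℝ) ^ (1 - θ)) ^ k := by
    push_cast
    rw [mul_rpow (by positivity) (by positivity), ← rpow_natCast, ← rpow_natCast,
      ← rpow_mul two_pos.le, ← rpow_mul two_pos.le, mul_comm (k : ℝ)]
  have hlog : log (2 * ((m * 2 ^ k : ℕ) : ℝ)) ≤ ((k : ℝ) + 2) * log m := by
    have := log_mul_two_pow_le (m := m) (by linarith) k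
    push_cast
    rwa [show 2 * ((m : ℝ) * 2 ^ k) = m * 2 ^ (k + 1) by ring]
  have hlog₀ : 0 ≤ log (2 * ((m * 2 ^ k : ℕ) : ℝ)) := log_nonneg (by
    have : (3 : ℝ) ≤ (m * 2 ^ k : ℕ) := by exact_mod_cast hN
    linarith)
  calc _ ≤ 2 * c * ((m * 2 ^ k : ℕ) : ℝ) ^ (1 - θ) * log (2 * ((m * 2 ^ k : ℕ) : ℝ)) ^ (e + j) :=
        hblock
    _ ≤ 2 * c * ((m * 2 ^ k : ℕ) : ℝ) ^ (1 - θ) * (((k : ℝ) + 2) * log m) ^ (e + j) := by gcongr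
    _ = _ := by rw [hrpow, mul_pow]; ring

theorem exists_tail_bound_of_sum_le (ha : ∀ n, 0 ≤ a n) (hc : 0 < c) (hθ : 1 < θ) (j : ℕ)
    (hS : ∀ m : ℕ, 3 ≤ m → ∑ n ∈ Icc 1 m, a n ≤ c * m * log m ^ e) :
    ∃ B : ℝ, 0 < B ∧ ∀ x : ℝ, 3 ≤ x →
      Summable (fun n : ℕ => if x < n then a n * log n ^ j * (n : ℝ) ^ (-θ) else 0) ∧
      ∑' n : ℕ, (if x < n then a n * log n ^ j * (n : ℝ) ^ (-θ) else 0)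
        ≤ B * log x ^ (e + j) * x ^ (1 - θ) := by
  set r : ℝ := (2 : ℝ) ^ (1 - θ)
  have hr₀ : 0 < r := rpow_pos_of_pos two_pos _
  have hr₁ : r < 1 := rpow_lt_one_of_one_lt_of_neg one_lt_two (by linarith)
  have hsum := summable_add_two_pow_mul_geometric hr₀.ne' (by rwa [norm_of_nonneg hr₀.le]) (e + j)
  set K := ∑' k : ℕ, ((k : ℝ) + 2) ^ (e + j) * r ^ k
  have hK : 0 < K := hsum.tsum_pos (fun k => by positivity) 0 (by positivity)
  refine ⟨2 * c * K * (2 / 3 : ℝ) ^ (1 - θ), by positivity, fun x hx => ?_⟩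
  have hx₀ : 0 ≤ x := by linarith
  set m := ⌊x⌋₊
  have hm : 3 ≤ m := Nat.le_floor (by exact_mod_cast hx)
  have hmx : (m : ℝ) ≤ x := Nat.floor_le hx₀
  have hxm : 2 / 3 * x ≤ m := by linarith [Nat.lt_floor_add_one x, (Nat.cast_le (α := ℝ)).mpr hm]
  simp_rw [← Nat.floor_lt hx₀]
  obtain ⟨hsummable, htsum⟩ := summable_and_tsum_le_of_dyadic_blocks
    (fun n => by have := log_natCast_nonneg n; have := ha n; positivity)
    (hsum.mul_left (2 * c * (m : ℝ) ^ (1 - θ) * log m ^ (e + j))) (by omega)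
    (sum_Ioc_mul_two_pow_le ha hc.le (by linarith) j hS hm)
  refine ⟨hsummable, htsum.trans ?_⟩
  have hmpow : (m : ℝ) ^ (1 - θ) ≤ (2 / 3 : ℝ) ^ (1 - θ) * x ^ (1 - θ) := by
    rw [← mul_rpow (by norm_num) hx₀]
    exact rpow_le_rpow_of_nonpos (by positivity) hxm (by linarith)
  have hlog : log m ^ (e + j) ≤ log x ^ (e + j) := by gcongr
  rw [tsum_mul_left]
  calc 2 * c * (m : ℝ) ^ (1 - θ) * log m ^ (e + j) * K
      ≤ 2 * c * ((2 / 3 : ℝ) ^ (1 - θ) * x ^ (1 - θ)) * log x ^ (e + j) * K := by gcongr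
    _ = _ := by ring

end TailBound

theorem stmt_2 (i j : ℕ) (θ : ℝ) (hθ : 1 < θ) (C A : ℝ) (hC : 0 < C) (hA : 0 < A)
    (h : ∀ t : ℝ, 3 ≤ t →
      |(∑ n ∈ Finset.Icc 1 ⌊t⌋₊, ((n.divisors.card : ℝ)) ^ i)
          - C * t * Real.log t ^ (2 ^ i - 1)| ≤ A * t * Real.log t ^ (2 ^ i - 2)) :
    ∃ B : ℝ, 0 < B ∧ ∀ x : ℝ, 3 ≤ x →
      Summable (fun n : ℕ =>
        if x < (n : ℝ) then ((n.divisors.card : ℝ)) ^ i * Real.log n ^ j * (n : ℝ) ^ (-θ)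
        else 0) ∧
      (∑' n : ℕ,
        if x < (n : ℝ) then ((n.divisors.card : ℝ)) ^ i * Real.log n ^ j * (n : ℝ) ^ (-θ)
        else 0)
        ≤ B * Real.log x ^ (2 ^ i + j - 1) * x ^ (1 - θ) := by
  have hS : ∀ m : ℕ, 3 ≤ m →
      ∑ n ∈ Icc 1 m, (n.divisors.card : ℝ) ^ i ≤ (C + A) * m * log m ^ (2 ^ i - 1) := by
    intro m hm
    have hm' : (3 : ℝ) ≤ m := by exact_mod_cast hm
    have hm_abs := h m hm'
    rw [Nat.floor_natCast] at hm_abs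
    exact le_add_mul_of_abs_sub_le hA.le (by positivity) (one_le_log_of_three_le hm') (by omega)
      hm_abs
  obtain ⟨B, hB, htail⟩ :=
    exists_tail_bound_of_sum_le (fun n => by positivity) (add_pos hC hA) hθ j hS
  refine ⟨B, hB, fun x hx => ?_⟩
  rw [show 2 ^ i + j - 1 = 2 ^ i - 1 + j by have := Nat.one_le_two_pow (n := i); omega]
  exact htail x hx
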